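/- arXiv:2105.11884 — 7 statements merged into one kernel-verified Lean document; each statement's English description precedes it below -/
import Mathlib

section
/- Let K be a small category and G a group of automorphisms of K acting semi-regularly on K. Then K is foldable by G and the orbit category K/G exists; in particular the orbit composition a^G * b^G := (a*b)^G is well defined (independent of the chosen composable representatives) and associative. -/
set_option linter.unusedVariables false

/-- A small category, presented as a directed graph with a partial composition
that is defined exactly on composable pairs of arrows. -/
structure SmallCat where
  Obj : Type
  Arr : Type
  src : Arr → Obj
  tgt : Arr → Obj
  id : Obj → Arr
  src_id : ∀ x, src (id x) = x
  tgt_id : ∀ x, tgt (id x) = x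
  comp : ∀ a b, tgt a = src b → Arr
  src_comp : ∀ a b h, src (comp a b h) = src a
  tgt_comp : ∀ a b h, tgt (comp a b h) = tgt b
  id_comp : ∀ a, comp (id (src a)) a (tgt_id (src a)) = a
  comp_id : ∀ a, comp a (id (tgt a)) ((src_id (tgt a)).symm) = a
  assoc : ∀ a b c (hab : tgt a = src b) (hbc : tgt b = src c),
    comp (comp a b hab) c (by rw [tgt_comp]; exact hbc) =
    comp a (comp b c hbc) (by rw [src_comp]; exact hab)

/-- An action of a group `G` on a small category `K` by category automorphisms,
written exponentially (left-associative: `a^(g*h) = (a^g)^h`). -/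
structure CatAction (G : Type) [Group G] (K : SmallCat) where
  onObj : G → K.Obj → K.Obj
  onArr : G → K.Arr → K.Arr
  onObj_one : ∀ x, onObj 1 x = x
  onObj_mul : ∀ g h x, onObj (g * h) x = onObj h (onObj g x)
  onArr_one : ∀ a, onArr 1 a = a
  onArr_mul : ∀ g h a, onArr (g * h) a = onArr h (onArr g a)
  src_onArr : ∀ g a, K.src (onArr g a) = onObj g (K.src a)
  tgt_onArr : ∀ g a, K.tgt (onArr g a) = onObj g (K.tgt a)
  onArr_id : ∀ g x, onArr g (K.id x) = K.id (onObj g x)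
  onArr_comp : ∀ g a b (h : K.tgt a = K.src b),
    onArr g (K.comp a b h) = K.comp (onArr g a) (onArr g b)
      (by rw [tgt_onArr, src_onArr, h])

/-- The action is semi-regular: only the unit fixes an object or an arrow. -/
def SemiRegular {G : Type} [Group G] {K : SmallCat} (ρ : CatAction G K) : Prop :=
  (∀ g x, ρ.onObj g x = x → g = 1) ∧ (∀ g a, ρ.onArr g a = a → g = 1)

/-- Orbit of an object. -/
def orbitO {G : Type} [Group G] {K : SmallCat} (ρ : CatAction G K) (x : K.Obj) : Set K.Obj :=
  {y | ∃ g : G, ρ.onObj g x = y}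

/-- The arrows of the full subcategory generated by the orbit of `x`. -/
def orbitA {G : Type} [Group G] {K : SmallCat} (ρ : CatAction G K) (x : K.Obj) : Set K.Arr :=
  {a | K.src a ∈ orbitO ρ x ∧ K.tgt a ∈ orbitO ρ x}

/-- The setoid of object orbits. -/
def objSetoid {G : Type} [Group G] {K : SmallCat} (ρ : CatAction G K) : Setoid K.Obj where
  r x y := ∃ g : G, ρ.onObj g x = y
  iseqv := by
    constructor
    · exact fun x => ⟨1, ρ.onObj_one x⟩
    · rintro x y ⟨g, rfl⟩
      exact ⟨g⁻¹, by rw [← ρ.onObj_mul, mul_inv_cancel, ρ.onObj_one]⟩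
    · rintro x y z ⟨g, rfl⟩ ⟨h, rfl⟩
      exact ⟨g * h, by rw [ρ.onObj_mul]⟩

/-- The setoid of arrow orbits. -/
def arrSetoid {G : Type} [Group G] {K : SmallCat} (ρ : CatAction G K) : Setoid K.Arr where
  r a b := ∃ g : G, ρ.onArr g a = b
  iseqv := by
    constructor
    · exact fun a => ⟨1, ρ.onArr_one a⟩
    · rintro a b ⟨g, rfl⟩
      exact ⟨g⁻¹, by rw [← ρ.onArr_mul, mul_inv_cancel, ρ.onArr_one]⟩
    · rintro a b c ⟨g, rfl⟩ ⟨h, rfl⟩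
      exact ⟨g * h, by rw [ρ.onArr_mul]⟩

/-- The source of an arrow orbit. -/
def srcQ {G : Type} [Group G] {K : SmallCat} (ρ : CatAction G K) :
    Quotient (arrSetoid ρ) → Quotient (objSetoid ρ) :=
  Quotient.lift (fun a => Quotient.mk (objSetoid ρ) (K.src a)) (by
    rintro a b ⟨g, rfl⟩
    exact Quotient.sound ⟨g, (ρ.src_onArr g a).symm⟩)

/-- The target of an arrow orbit. -/
def tgtQ {G : Type} [Group G] {K : SmallCat} (ρ : CatAction G K) :
    Quotient (arrSetoid ρ) → Quotient (objSetoid ρ) :=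
  Quotient.lift (fun a => Quotient.mk (objSetoid ρ) (K.tgt a)) (by
    rintro a b ⟨g, rfl⟩
    exact Quotient.sound ⟨g, (ρ.tgt_onArr g a).symm⟩)

/-- The identity arrow orbit of an object orbit. -/
def idQ {G : Type} [Group G] {K : SmallCat} (ρ : CatAction G K) :
    Quotient (objSetoid ρ) → Quotient (arrSetoid ρ) :=
  Quotient.lift (fun x => Quotient.mk (arrSetoid ρ) (K.id x)) (by
    rintro x y ⟨g, rfl⟩
    exact Quotient.sound ⟨g, ρ.onArr_id g x⟩)

/-- `CompRelQ ρ α β γ` expresses that in the orbit category the composite of the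
arrow orbits `α` and `β` is `γ`, i.e. that `γ` is the orbit of a composite of
composable representatives of `α` and `β`. -/
def CompRelQ {G : Type} [Group G] {K : SmallCat} (ρ : CatAction G K)
    (α β γ : Quotient (arrSetoid ρ)) : Prop :=
  ∃ (a b : K.Arr) (h : K.tgt a = K.src b),
    Quotient.mk (arrSetoid ρ) a = α ∧ Quotient.mk (arrSetoid ρ) b = β ∧
    Quotient.mk (arrSetoid ρ) (K.comp a b h) = γ

/-- An annotation: a contravariant homomorphism from a small category into a group. -/
structure Annotation (K : SmallCat) (G : Type) [Group G] where
  map : K.Arr → G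
  map_id : ∀ x, map (K.id x) = 1
  map_comp : ∀ a b (h : K.tgt a = K.src b), map (K.comp a b h) = map b * map a

/-- The partial operation `⊙` of a representation `(K, A, G)`. -/
def odot {G : Type} [Group G] {K : SmallCat} (A : Annotation K G) (p q : K.Arr × G)
    (h : K.tgt p.1 = K.src q.1) (_ : q.2 = A.map p.1 * p.2) : K.Arr × G :=
  (K.comp p.1 q.1 h, p.2)

/-- The unfolding `E(K,A,G)` of a representation `(K,A,G)`. -/
def Unfolding (K : SmallCat) {G : Type} [Group G] (A : Annotation K G) : SmallCat where
  Obj := K.Obj × G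
  Arr := K.Arr × G
  src p := (K.src p.1, p.2)
  tgt p := (K.tgt p.1, A.map p.1 * p.2)
  id x := (K.id x.1, x.2)
  src_id x := by simp [K.src_id]
  tgt_id x := by simp [K.tgt_id, A.map_id]
  comp p q h := (K.comp p.1 q.1 (congrArg Prod.fst h), p.2)
  src_comp p q h := by simp [K.src_comp]
  tgt_comp p q h := by
    have h2 : A.map p.1 * p.2 = q.2 := congrArg Prod.snd h
    simp [K.tgt_comp, A.map_comp, mul_assoc, h2]
  id_comp p := by
    refine Prod.ext ?_ rfl
    exact K.id_comp p.1
  comp_id p := by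
    refine Prod.ext ?_ rfl
    exact K.comp_id p.1
  assoc p q s hpq hqs := by
    refine Prod.ext ?_ rfl
    exact K.assoc p.1 q.1 s.1 (congrArg Prod.fst hpq) (congrArg Prod.fst hqs)

/-- A homomorphism (functor) between small categories. -/
structure CatHom (K L : SmallCat) where
  onObj : K.Obj → L.Obj
  onArr : K.Arr → L.Arr
  src_onArr : ∀ a, L.src (onArr a) = onObj (K.src a)
  tgt_onArr : ∀ a, L.tgt (onArr a) = onObj (K.tgt a)
  onArr_id : ∀ x, onArr (K.id x) = L.id (onObj x)
  onArr_comp : ∀ a b (h : K.tgt a = K.src b),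
    onArr (K.comp a b h) = L.comp (onArr a) (onArr b)
      (by rw [tgt_onArr, src_onArr, h])

/-- A functor is full. -/
def IsFull {K L : SmallCat} (F : CatHom K L) : Prop :=
  ∀ (x y : K.Obj) (b : L.Arr), L.src b = F.onObj x → L.tgt b = F.onObj y →
    ∃ a : K.Arr, K.src a = x ∧ K.tgt a = y ∧ F.onArr a = b

/-- A functor is faithful. -/
def IsFaithful {K L : SmallCat} (F : CatHom K L) : Prop :=
  ∀ a a' : K.Arr, K.src a = K.src a' → K.tgt a = K.tgt a' → F.onArr a = F.onArr a' → a = a'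

/-- A translative automorphism group action: semi-regular, and any two orbits
generate isomorphic full subcategories, by an isomorphism commuting with the action. -/
def Translative {G : Type} [Group G] {K : SmallCat} (ρ : CatAction G K) : Prop :=
  SemiRegular ρ ∧
  ∀ a b : K.Obj, ∃ (φo : K.Obj → K.Obj) (φa : K.Arr → K.Arr),
    Set.BijOn φo (orbitO ρ a) (orbitO ρ b) ∧
    Set.BijOn φa (orbitA ρ a) (orbitA ρ b) ∧
    (∀ f ∈ orbitA ρ a, K.src (φa f) = φo (K.src f)) ∧
    (∀ f ∈ orbitA ρ a, K.tgt (φa f) = φo (K.tgt f)) ∧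
    (∀ x ∈ orbitO ρ a, φa (K.id x) = K.id (φo x)) ∧
    (∀ (f f' : K.Arr) (h : K.tgt f = K.src f'), f ∈ orbitA ρ a → f' ∈ orbitA ρ a →
      ∀ h', φa (K.comp f f' h) = K.comp (φa f) (φa f') h') ∧
    (∀ (g : G), ∀ x ∈ orbitO ρ a, φo (ρ.onObj g x) = ρ.onObj g (φo x)) ∧
    (∀ (g : G), ∀ f ∈ orbitA ρ a, φa (ρ.onArr g f) = ρ.onArr g (φa f))

/-- `T` is a transversal of the object orbits. -/
def IsTransversal {G : Type} [Group G] {K : SmallCat} (ρ : CatAction G K)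
    (T : Set K.Obj) : Prop :=
  ∀ x : K.Obj, ∃! t, t ∈ T ∧ t ∈ orbitO ρ x

/-- The natural annotation associated with the canonical automorphisms `gT`. -/
def natAnn {G : Type} [Group G] {K : SmallCat} (ρ : CatAction G K)
    (gT : K.Obj → G) (a : K.Arr) : G :=
  gT (K.tgt a) * (gT (K.src a))⁻¹

/-- `RightNormalWith ρ C` : the map `C` witnesses that `ρ` is right-normal:
in the orbit category, loop orbits can be moved from the left of an arrow orbit
to its right. -/
def RightNormalWith {G : Type} [Group G] {K : SmallCat} (ρ : CatAction G K)
    (C : Quotient (arrSetoid ρ) → Quotient (arrSetoid ρ) → Quotient (arrSetoid ρ)) : Prop :=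
  (∀ (a x : K.Arr),
    srcQ ρ (Quotient.mk (arrSetoid ρ) x) = srcQ ρ (Quotient.mk (arrSetoid ρ) a) →
    tgtQ ρ (Quotient.mk (arrSetoid ρ) x) = srcQ ρ (Quotient.mk (arrSetoid ρ) a) →
    ((srcQ ρ (C (Quotient.mk (arrSetoid ρ) a) (Quotient.mk (arrSetoid ρ) x)) =
        tgtQ ρ (Quotient.mk (arrSetoid ρ) a) ∧
      tgtQ ρ (C (Quotient.mk (arrSetoid ρ) a) (Quotient.mk (arrSetoid ρ) x)) =
        tgtQ ρ (Quotient.mk (arrSetoid ρ) a)) ∧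
      (∀ (x' a' : K.Arr) (h1 : K.tgt x' = K.src a'),
        Quotient.mk (arrSetoid ρ) x' = Quotient.mk (arrSetoid ρ) x →
        Quotient.mk (arrSetoid ρ) a' = Quotient.mk (arrSetoid ρ) a →
        ∀ (a'' c : K.Arr) (h2 : K.tgt a'' = K.src c),
          Quotient.mk (arrSetoid ρ) a'' = Quotient.mk (arrSetoid ρ) a →
          Quotient.mk (arrSetoid ρ) c =
            C (Quotient.mk (arrSetoid ρ) a) (Quotient.mk (arrSetoid ρ) x) →
          Quotient.mk (arrSetoid ρ) (K.comp x' a' h1) =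
            Quotient.mk (arrSetoid ρ) (K.comp a'' c h2)))) ∧
  (∀ a : K.Arr,
    C (Quotient.mk (arrSetoid ρ) a) (Quotient.mk (arrSetoid ρ) (K.id (K.src a))) =
      Quotient.mk (arrSetoid ρ) (K.id (K.tgt a)))

/-- The action `ρ` is right-normal. -/
def RightNormal {G : Type} [Group G] {K : SmallCat} (ρ : CatAction G K) : Prop :=
  ∃ C, RightNormalWith ρ C

/-- An arrow orbit is an identity orbit. -/
def IsIdQ {G : Type} [Group G] {K : SmallCat} (ρ : CatAction G K)
    (α : Quotient (arrSetoid ρ)) : Prop :=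
  ∃ x : K.Obj, α = Quotient.mk (arrSetoid ρ) (K.id x)

/-- An arrow of the orbit category is reducible: it is an arrow with the same
endpoints followed by a non-identity loop. -/
def ReducibleQ {G : Type} [Group G] {K : SmallCat} (ρ : CatAction G K)
    (β : Quotient (arrSetoid ρ)) : Prop :=
  ∃ b l, CompRelQ ρ b l β ∧ tgtQ ρ b = tgtQ ρ β ∧ ¬ IsIdQ ρ l

/-- An arrow of the orbit category is irreducible. -/
def IrreducibleQ {G : Type} [Group G] {K : SmallCat} (ρ : CatAction G K)
    (β : Quotient (arrSetoid ρ)) : Prop :=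
  ¬ ReducibleQ ρ β

/-- The orbit category is uniquely representable by irreducible arrows,
with irreducible part `r` and loop part `n`. -/
def UniqRep {G : Type} [Group G] {K : SmallCat} (ρ : CatAction G K)
    (r n : Quotient (arrSetoid ρ) → Quotient (arrSetoid ρ)) : Prop :=
  (∀ α, IrreducibleQ ρ (r α) ∧ srcQ ρ (r α) = srcQ ρ α ∧ tgtQ ρ (r α) = tgtQ ρ α ∧
    srcQ ρ (n α) = tgtQ ρ α ∧ tgtQ ρ (n α) = tgtQ ρ α ∧ CompRelQ ρ (r α) (n α) α) ∧
  (∀ α b l, CompRelQ ρ b l α → tgtQ ρ b = tgtQ ρ α → srcQ ρ l = tgtQ ρ l →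
    IrreducibleQ ρ b → b = r α ∧ l = n α)

/-- A right-groupal category: a small category whose objects form a group which
acts on the category by a left-associative automorphism action, compatible with
right multiplication on the objects. -/
structure RGC where
  K : SmallCat
  mul : K.Obj → K.Obj → K.Obj
  one : K.Obj
  inv : K.Obj → K.Obj
  mul_assoc : ∀ x y z, mul (mul x y) z = mul x (mul y z)
  one_mul : ∀ x, mul one x = x
  mul_one : ∀ x, mul x one = x
  inv_mul : ∀ x, mul (inv x) x = one
  mul_inv : ∀ x, mul x (inv x) = one
  act : K.Arr → K.Obj → K.Arr
  act_one : ∀ a, act a one = a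
  act_mul : ∀ a x y, act (act a x) y = act a (mul x y)
  src_act : ∀ a x, K.src (act a x) = mul (K.src a) x
  tgt_act : ∀ a x, K.tgt (act a x) = mul (K.tgt a) x
  act_id : ∀ y x, act (K.id y) x = K.id (mul y x)
  act_comp : ∀ a b (h : K.tgt a = K.src b) x,
    act (K.comp a b h) x = K.comp (act a x) (act b x) (by rw [tgt_act, src_act, h])

/-- A groupal category: a right-groupal category together with a commuting
second (left-multiplication style) action satisfying the interchange law. -/
structure GroupalCat extends RGC where
  lact : K.Obj → K.Arr → K.Arr
  lact_one : ∀ a, lact one a = a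
  lact_mul : ∀ x y a, lact x (lact y a) = lact (mul x y) a
  src_lact : ∀ x a, K.src (lact x a) = mul x (K.src a)
  tgt_lact : ∀ x a, K.tgt (lact x a) = mul x (K.tgt a)
  lact_id : ∀ x y, lact x (K.id y) = K.id (mul x y)
  lact_comp : ∀ x a b (h : K.tgt a = K.src b),
    lact x (K.comp a b h) = K.comp (lact x a) (lact x b) (by rw [tgt_lact, src_lact, h])
  lact_act : ∀ x a y, lact x (act a y) = act (lact x a) y
  interchange : ∀ (a b : K.Arr),
    K.comp (act a (K.src b)) (lact (K.tgt a) b) (by rw [tgt_act, src_lact]) =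
    K.comp (lact (K.src a) b) (act a (K.tgt b)) (by rw [tgt_lact, src_act])

/-- A po-group `P`, viewed as the simple category with a unique arrow `x → y` iff `x ≤ y`. -/
def poCat (P : Type) [Group P] [PartialOrder P] : SmallCat where
  Obj := P
  Arr := {p : P × P // p.1 ≤ p.2}
  src p := p.1.1
  tgt p := p.1.2
  id x := ⟨(x, x), le_refl x⟩
  src_id x := rfl
  tgt_id x := rfl
  comp a b h := ⟨(a.1.1, b.1.2), a.2.trans ((show (a.1).2 = (b.1).1 from h).trans_le b.2)⟩
  src_comp a b h := rfl
  tgt_comp a b h := rfl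
  id_comp a := rfl
  comp_id a := rfl
  assoc a b c hab hbc := rfl

section Aux

variable {G : Type} [Group G] {K : SmallCat} (ρ : CatAction G K)

lemma fold_lemma (hsr : SemiRegular ρ) (a b c d : K.Arr)
    (hab : K.tgt a = K.src b) (hcd : K.tgt c = K.src d)
    (h1 : Quotient.mk (arrSetoid ρ) a = Quotient.mk (arrSetoid ρ) c)
    (h2 : Quotient.mk (arrSetoid ρ) b = Quotient.mk (arrSetoid ρ) d) :
    Quotient.mk (arrSetoid ρ) (K.comp a b hab) = Quotient.mk (arrSetoid ρ) (K.comp c d hcd) := by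
  obtain ⟨g, rfl⟩ := Quotient.exact h1
  obtain ⟨g', rfl⟩ := Quotient.exact h2
  have hx : ρ.onObj g' (K.src b) = ρ.onObj g (K.src b) := by
    have h := hcd
    rw [ρ.tgt_onArr, ρ.src_onArr, hab] at h
    exact h.symm
  have hfix : ρ.onObj (g' * g⁻¹) (K.src b) = K.src b := by
    rw [ρ.onObj_mul, hx, ← ρ.onObj_mul, mul_inv_cancel, ρ.onObj_one]
  have hg : g' = g := mul_inv_eq_one.mp (hsr.1 _ _ hfix)
  subst hg
  exact Quotient.sound ⟨g', ρ.onArr_comp g' a b hab⟩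

/-- Existence of a translating group element for composable orbits. -/
lemma compQaux_ex (α β : Quotient (arrSetoid ρ)) (h : tgtQ ρ α = srcQ ρ β) :
    ∃ g : G, ρ.onObj g (K.tgt α.out) = K.src β.out := by
  rw [← Quotient.out_eq α, ← Quotient.out_eq β] at h
  exact Quotient.exact h

noncomputable def compQaux (α β : Quotient (arrSetoid ρ)) (h : tgtQ ρ α = srcQ ρ β) :
    Quotient (arrSetoid ρ) :=
  Quotient.mk (arrSetoid ρ)
    (K.comp (ρ.onArr (compQaux_ex ρ α β h).choose α.out) β.out
      (by rw [ρ.tgt_onArr]; exact (compQaux_ex ρ α β h).choose_spec))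

lemma compQaux_spec (hsr : SemiRegular ρ) (α β : Quotient (arrSetoid ρ))
    (h : tgtQ ρ α = srcQ ρ β) (a b : K.Arr) (hab : K.tgt a = K.src b)
    (ha : α = Quotient.mk (arrSetoid ρ) a) (hb : β = Quotient.mk (arrSetoid ρ) b) :
    compQaux ρ α β h = Quotient.mk (arrSetoid ρ) (K.comp a b hab) := by
  apply fold_lemma ρ hsr
  · rw [← ha]
    have hs : Quotient.mk (arrSetoid ρ) α.out =
        Quotient.mk (arrSetoid ρ) (ρ.onArr (compQaux_ex ρ α β h).choose α.out) :=
      Quotient.sound ⟨(compQaux_ex ρ α β h).choose, rfl⟩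
    exact hs.symm.trans (Quotient.out_eq α)
  · rw [← hb]; exact Quotient.out_eq β

end Aux

/-- If a group `G` acts semi-regularly on a small category `K`,
then `K` is foldable by `G` and the orbit category `K/G` exists: the orbit
composition `a^G * b^G := (a*b)^G` is well defined and associative. -/
theorem orbit_category_exists {G : Type} [Group G] (K : SmallCat) (ρ : CatAction G K)
    (hsr : SemiRegular ρ) :
    (∀ (a b c d : K.Arr) (hab : K.tgt a = K.src b) (hcd : K.tgt c = K.src d),
      Quotient.mk (arrSetoid ρ) a = Quotient.mk (arrSetoid ρ) c →
      Quotient.mk (arrSetoid ρ) b = Quotient.mk (arrSetoid ρ) d →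
      Quotient.mk (arrSetoid ρ) (K.comp a b hab) = Quotient.mk (arrSetoid ρ) (K.comp c d hcd))
    ∧
    ∃ compQ : ∀ (α β : Quotient (arrSetoid ρ)), tgtQ ρ α = srcQ ρ β → Quotient (arrSetoid ρ),
      (∀ (a b : K.Arr) (hab : K.tgt a = K.src b)
          (h : tgtQ ρ (Quotient.mk (arrSetoid ρ) a) = srcQ ρ (Quotient.mk (arrSetoid ρ) b)),
        compQ (Quotient.mk (arrSetoid ρ) a) (Quotient.mk (arrSetoid ρ) b) h =
          Quotient.mk (arrSetoid ρ) (K.comp a b hab)) ∧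
      (∀ (α β γ : Quotient (arrSetoid ρ)) (h1 : tgtQ ρ α = srcQ ρ β)
          (h2 : tgtQ ρ β = srcQ ρ γ) (h3 : tgtQ ρ (compQ α β h1) = srcQ ρ γ)
          (h4 : tgtQ ρ α = srcQ ρ (compQ β γ h2)),
        compQ (compQ α β h1) γ h3 = compQ α (compQ β γ h2) h4) := by
  refine ⟨fold_lemma ρ hsr, compQaux ρ, ?_, ?_⟩
  · intro a b hab h
    exact compQaux_spec ρ hsr _ _ h a b hab rfl rfl
  · intro α β γ h1 h2 h3 h4
    obtain ⟨g1, hg1⟩ := compQaux_ex ρ α β h1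
    set a1 := ρ.onArr g1 α.out with ha1
    have ha1c : K.tgt a1 = K.src β.out := by rw [ρ.tgt_onArr]; exact hg1
    have hα : α = Quotient.mk (arrSetoid ρ) a1 :=
      (Quotient.out_eq α).symm.trans (Quotient.sound ⟨g1, rfl⟩)
    have e1 : compQaux ρ α β h1 = Quotient.mk (arrSetoid ρ) (K.comp a1 β.out ha1c) :=
      compQaux_spec ρ hsr α β h1 a1 β.out ha1c hα (Quotient.out_eq β).symm
    have hex2 : ∃ g : G, ρ.onObj g (K.tgt (K.comp a1 β.out ha1c)) = K.src γ.out := by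
      have h3' := h3
      rw [e1, ← Quotient.out_eq γ] at h3'
      exact Quotient.exact
        (show Quotient.mk (objSetoid ρ) (K.tgt (K.comp a1 β.out ha1c)) =
          Quotient.mk (objSetoid ρ) (K.src γ.out) from h3')
    obtain ⟨g2, hg2⟩ := hex2
    have hg2' : ρ.onObj g2 (K.tgt β.out) = K.src γ.out := by
      rw [← K.tgt_comp a1 β.out ha1c]; exact hg2
    set a2 := ρ.onArr g2 a1 with ha2
    set b2 := ρ.onArr g2 β.out with hb2
    have hb2c : K.tgt b2 = K.src γ.out := by rw [hb2, ρ.tgt_onArr]; exact hg2'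
    have ha2b2 : K.tgt a2 = K.src b2 := by rw [ha2, hb2, ρ.tgt_onArr, ρ.src_onArr, ha1c]
    have hd2 : Quotient.mk (arrSetoid ρ) (K.comp a1 β.out ha1c) =
        Quotient.mk (arrSetoid ρ) (K.comp a2 b2 ha2b2) :=
      Quotient.sound ⟨g2, ρ.onArr_comp g2 a1 β.out ha1c⟩
    have hcomp2 : K.tgt (K.comp a2 b2 ha2b2) = K.src γ.out := by
      rw [K.tgt_comp]; exact hb2c
    have eL : compQaux ρ (compQaux ρ α β h1) γ h3 =
        Quotient.mk (arrSetoid ρ) (K.comp (K.comp a2 b2 ha2b2) γ.out hcomp2) :=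
      compQaux_spec ρ hsr _ _ h3 _ _ hcomp2 (e1.trans hd2) (Quotient.out_eq γ).symm
    have hβ2 : β = Quotient.mk (arrSetoid ρ) b2 :=
      (Quotient.out_eq β).symm.trans (Quotient.sound ⟨g2, rfl⟩)
    have eR1 : compQaux ρ β γ h2 = Quotient.mk (arrSetoid ρ) (K.comp b2 γ.out hb2c) :=
      compQaux_spec ρ hsr β γ h2 b2 γ.out hb2c hβ2 (Quotient.out_eq γ).symm
    have hacomp : K.tgt a2 = K.src (K.comp b2 γ.out hb2c) := by
      rw [K.src_comp]; exact ha2b2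
    have hα2 : α = Quotient.mk (arrSetoid ρ) a2 :=
      hα.trans (Quotient.sound ⟨g2, rfl⟩)
    have eR : compQaux ρ α (compQaux ρ β γ h2) h4 =
        Quotient.mk (arrSetoid ρ) (K.comp a2 (K.comp b2 γ.out hb2c) hacomp) :=
      compQaux_spec ρ hsr _ _ h4 _ _ hacomp hα2 eR1
    rw [eL, eR]
    exact congrArg (Quotient.mk (arrSetoid ρ)) (K.assoc a2 b2 γ.out ha2b2 hb2c)
end

section
/- Let (K,A,G) be a representation and let G act on the unfolding E(K,A,G) by (x,h)^g = (x,hg) on objects and (a,h)^g = (a,hg) on arrows. Then the orbit category E(K,A,G)/G of the unfolding with respect to this action is isomorphic to the original category K. -/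
set_option linter.unusedVariables false

/-!
The action only moves the `G`-coordinate, and does so transitively (`(x, h)` is sent to `(x, h')` by
`g = h⁻¹ h'`), so the orbit relations on objects and arrows of `E(K,A,G)` are the kernels of the first
projections. Hence the first projections descend to bijections from the orbits onto `Ob K` and `Mor K`;
the structure maps of the unfolding act on first coordinates exactly as those of `K` do, so these
bijections form a functor.
-/

theorem Prod.exists_mul_right_eq_iff {X G : Type*} [Group G] (p q : X × G) :
    (∃ g : G, (p.1, p.2 * g) = q) ↔ p.1 = q.1 := by
  refine ⟨fun ⟨g, hg⟩ => by rw [← hg], fun h => ⟨p.2⁻¹ * q.2, ?_⟩⟩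
  rw [mul_inv_cancel_left]
  exact Prod.ext h rfl

theorem Setoid.bijective_lift_of_eq_ker {α β : Type*} {r : Setoid α} {f : α → β}
    (hr : r = Setoid.ker f) (hf : Function.Surjective f) :
    Function.Bijective (Quotient.lift f hr.le) :=
  ⟨(Setoid.lift_injective_iff_ker_eq_of_le hr.le).2 hr.symm, Quotient.lift_surjective f _ hf⟩

namespace Unfolding

variable {G : Type} [Group G] {K : SmallCat} {A : Annotation K G}
  (ρ : CatAction G (Unfolding K A))

theorem objSetoid_eq_ker_fst (hO : ∀ (g : G) (p : K.Obj × G), ρ.onObj g p = (p.1, p.2 * g)) :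
    objSetoid ρ = Setoid.ker Prod.fst :=
  Setoid.ext fun (p q : K.Obj × G) => by
    change (∃ g, ρ.onObj g p = q) ↔ p.1 = q.1
    simp only [hO]
    exact Prod.exists_mul_right_eq_iff p q

theorem arrSetoid_eq_ker_fst (hA : ∀ (g : G) (p : K.Arr × G), ρ.onArr g p = (p.1, p.2 * g)) :
    arrSetoid ρ = Setoid.ker Prod.fst :=
  Setoid.ext fun (a b : K.Arr × G) => by
    change (∃ g, ρ.onArr g a = b) ↔ a.1 = b.1
    simp only [hA]
    exact Prod.exists_mul_right_eq_iff a b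

end Unfolding

/-- For a representation `(K,A,G)` with `G` acting on the
unfolding `E(K,A,G)` by `(x,h)^g = (x,hg)`, `(a,h)^g = (a,hg)`, the orbit
category `E(K,A,G)/G` is isomorphic to the original category `K`. -/
theorem orbit_category_of_unfolding_iso {G : Type} [Group G] (K : SmallCat)
    (A : Annotation K G) (ρ : CatAction G (Unfolding K A))
    (hO : ∀ (g : G) (p : K.Obj × G), ρ.onObj g p = (p.1, p.2 * g))
    (hA : ∀ (g : G) (p : K.Arr × G), ρ.onArr g p = (p.1, p.2 * g)) :
    ∃ (Fo : Quotient (objSetoid ρ) → K.Obj) (Fa : Quotient (arrSetoid ρ) → K.Arr),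
      (∀ p : K.Obj × G, Fo (Quotient.mk (objSetoid ρ) p) = p.1) ∧
      (∀ a : K.Arr × G, Fa (Quotient.mk (arrSetoid ρ) a) = a.1) ∧
      Function.Bijective Fo ∧ Function.Bijective Fa ∧
      (∀ α, K.src (Fa α) = Fo (srcQ ρ α)) ∧
      (∀ α, K.tgt (Fa α) = Fo (tgtQ ρ α)) ∧
      (∀ ω, Fa (idQ ρ ω) = K.id (Fo ω)) ∧
      (∀ (a b : K.Arr × G) (h : (Unfolding K A).tgt a = (Unfolding K A).src b)
          (h' : K.tgt (Fa (Quotient.mk (arrSetoid ρ) a)) =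
            K.src (Fa (Quotient.mk (arrSetoid ρ) b))),
        Fa (Quotient.mk (arrSetoid ρ) ((Unfolding K A).comp a b h)) =
          K.comp (Fa (Quotient.mk (arrSetoid ρ) a)) (Fa (Quotient.mk (arrSetoid ρ) b)) h') := by
  have hObj := Unfolding.objSetoid_eq_ker_fst ρ hO
  have hArr := Unfolding.arrSetoid_eq_ker_fst ρ hA
  exact ⟨Quotient.lift Prod.fst hObj.le, Quotient.lift Prod.fst hArr.le, fun _ => rfl, fun _ => rfl,
    Setoid.bijective_lift_of_eq_ker hObj Prod.fst_surjective,
    Setoid.bijective_lift_of_eq_ker hArr Prod.fst_surjective,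
    fun α => Quotient.inductionOn α fun _ => rfl, fun α => Quotient.inductionOn α fun _ => rfl,
    fun ω => Quotient.inductionOn ω fun _ => rfl, fun _ _ _ _ => rfl⟩
end

section
/- Let K be a category, G ≤ Aut(K) a translative automorphism group, T a transversal of the object orbits, A_T the natural annotation, and let C be the transversal category (objects T, arrows Mor_C(x,y) = ⋃_{z ∈ y^G} Mor_K(x,z), composition a *_C b = a * b^{A_T(a)}) with annotation A(a) := A_T(a). Then the unfolding E(C,A,G) is isomorphic to K, an isomorphism being given on objects by (x,g) ↦ x^g and on arrows by (a,g) ↦ a^g. -/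
set_option linter.unusedVariables false

lemma SmallCat.comp_hcongr (K : SmallCat) {a a' b b' : K.Arr}
    (ha : a = a') (hb : b = b') (h : K.tgt a = K.src b) (h' : K.tgt a' = K.src b') :
    K.comp a b h = K.comp a' b' h' := by
  subst ha; subst hb; rfl

/-- Let `G ≤ Aut K` act translatively, `T` a transversal of the
object orbits with canonical automorphisms `gT` and natural annotation `A_T`,
and `C` the transversal category (objects `T`, arrows the arrows of `K`
starting in `T`, composition `a *_C b = a * b^(A_T a)`), annotated by `A_T`.
Then the unfolding `E(C, A_T, G)` is isomorphic to `K`, via `(x,g) ↦ x^g` on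
objects and `(a,g) ↦ a^g` on arrows.  (The isomorphism is spelled out
pointwise: the two maps are bijections which transform sources, targets,
identities and the composition of the unfolding into those of `K`.) -/
theorem transversal_unfolding_iso {G : Type} [Group G] (K : SmallCat)
    (ρ : CatAction G K) (htr : Translative ρ)
    (T : Set K.Obj) (hT : IsTransversal ρ T)
    (gT : K.Obj → G) (hgT : ∀ x, ρ.onObj (gT x)⁻¹ x ∈ T) :
    Function.Bijective (fun p : {x : K.Obj // x ∈ T} × G => ρ.onObj p.2 p.1.1) ∧
    Function.Bijective (fun p : {a : K.Arr // K.src a ∈ T} × G => ρ.onArr p.2 p.1.1) ∧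
    (∀ (a : K.Arr), K.src a ∈ T → ∀ g : G,
      K.src (ρ.onArr g a) = ρ.onObj g (K.src a)) ∧
    (∀ (a : K.Arr), K.src a ∈ T → ∀ g : G,
      K.tgt (ρ.onArr g a) =
        ρ.onObj (natAnn ρ gT a * g) (ρ.onObj (gT (K.tgt a))⁻¹ (K.tgt a))) ∧
    (∀ (x : K.Obj), x ∈ T → ∀ g : G, ρ.onArr g (K.id x) = K.id (ρ.onObj g x)) ∧
    (∀ (a b : K.Arr), K.src a ∈ T → K.src b ∈ T →
      ρ.onObj (gT (K.tgt a))⁻¹ (K.tgt a) = K.src b →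
      ∀ (g : G) (h1 : K.tgt a = K.src (ρ.onArr (natAnn ρ gT a) b))
        (h2 : K.tgt (ρ.onArr g a) = K.src (ρ.onArr (natAnn ρ gT a * g) b)),
        ρ.onArr g (K.comp a (ρ.onArr (natAnn ρ gT a) b) h1) =
          K.comp (ρ.onArr g a) (ρ.onArr (natAnn ρ gT a * g) b) h2) := by
  obtain ⟨⟨hsrO, hsrA⟩, -⟩ := htr
  have hOinv' : ∀ (g : G) x, ρ.onObj g (ρ.onObj g⁻¹ x) = x := fun g x => by
    rw [← ρ.onObj_mul, inv_mul_cancel, ρ.onObj_one]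
  have hAinv' : ∀ (g : G) a, ρ.onArr g (ρ.onArr g⁻¹ a) = a := fun g a => by
    rw [← ρ.onArr_mul, inv_mul_cancel, ρ.onArr_one]
  have hTuniq : ∀ x y : K.Obj, x ∈ T → y ∈ T → (∃ g : G, ρ.onObj g x = y) → x = y := by
    rintro x y hx hy hxy
    obtain ⟨t, _, huniq⟩ := hT x
    have h1 := huniq x ⟨hx, ⟨1, ρ.onObj_one x⟩⟩
    have h2 := huniq y ⟨hy, hxy⟩
    rw [h1, h2]
  have hgT1 : ∀ x ∈ T, gT x = 1 := by
    intro x hx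
    have hfix : ρ.onObj (gT x)⁻¹ x = x :=
      hTuniq _ _ (hgT x) hx ⟨gT x, hOinv' (gT x) x⟩
    have := hsrO _ _ hfix
    exact inv_eq_one.mp this
  have hObij : Function.Bijective (fun p : {x : K.Obj // x ∈ T} × G => ρ.onObj p.2 p.1.1) := by
    constructor
    · rintro ⟨⟨x, hx⟩, g⟩ ⟨⟨x', hx'⟩, g'⟩ h
      simp only at h
      have horb : ρ.onObj (g * g'⁻¹) x = x' := by
        rw [ρ.onObj_mul, h, ← ρ.onObj_mul, mul_inv_cancel, ρ.onObj_one]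
      have hxx : x = x' := hTuniq x x' hx hx' ⟨_, horb⟩
      subst hxx
      have hfix : ρ.onObj (g * g'⁻¹) x = x := horb
      have hg : g = g' := by
        have := hsrO _ _ hfix
        exact mul_inv_eq_one.mp this
      subst hg
      rfl
    · intro y
      exact ⟨(⟨_, hgT y⟩, gT y), hOinv' (gT y) y⟩
  have hAbij : Function.Bijective (fun p : {a : K.Arr // K.src a ∈ T} × G => ρ.onArr p.2 p.1.1) := by
    constructor
    · rintro ⟨⟨a, ha⟩, g⟩ ⟨⟨a', ha'⟩, g'⟩ h
      simp only at h
      have hsrc : ρ.onObj g (K.src a) = ρ.onObj g' (K.src a') := by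
        rw [← ρ.src_onArr, ← ρ.src_onArr, h]
      have horb : ρ.onObj (g * g'⁻¹) (K.src a) = K.src a' := by
        rw [ρ.onObj_mul, hsrc, ← ρ.onObj_mul, mul_inv_cancel, ρ.onObj_one]
      have hxx : K.src a = K.src a' := hTuniq _ _ ha ha' ⟨_, horb⟩
      have hg : g = g' := by
        have hfix : ρ.onObj (g * g'⁻¹) (K.src a) = K.src a := by rw [horb, hxx]
        exact mul_inv_eq_one.mp (hsrO _ _ hfix)
      subst hg
      have haa : a = a' := by
        have : ρ.onArr g⁻¹ (ρ.onArr g a) = ρ.onArr g⁻¹ (ρ.onArr g a') := by rw [h]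
        rwa [← ρ.onArr_mul, ← ρ.onArr_mul, mul_inv_cancel, ρ.onArr_one, ρ.onArr_one] at this
      subst haa
      rfl
    · intro b
      refine ⟨(⟨ρ.onArr (gT (K.src b))⁻¹ b, ?_⟩, gT (K.src b)), hAinv' _ b⟩
      rw [ρ.src_onArr]
      exact hgT (K.src b)
  refine ⟨hObij, hAbij, fun a _ g => ρ.src_onArr g a, ?_, fun x _ g => ρ.onArr_id g x, ?_⟩
  · intro a ha g
    rw [ρ.tgt_onArr, natAnn, hgT1 _ ha, inv_one, mul_one, ← ρ.onObj_mul, ← mul_assoc,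
      inv_mul_cancel, one_mul]
  · intro a b ha hb hsb g h1 h2
    rw [ρ.onArr_comp]
    exact K.comp_hcongr rfl (by rw [← ρ.onArr_mul]) _ _
end

section
/- Let K be a category, G ≤ Aut(K) a translative automorphism group, T a transversal of the object orbits with natural annotation A_T, and C the transversal category (objects T, arrows Mor_C(x,y) = ⋃_{z ∈ y^G} Mor_K(x,z), composition a *_C b = a * b^{A_T(a)}). Then C is isomorphic to the orbit category K/G, an isomorphism being given by x ↦ x^G on objects and a ↦ a^G on arrows, and this isomorphism preserves the natural annotation. -/
set_option linter.unusedVariables false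

/-- With `G ≤ Aut K` translative, `T` a transversal with canonical
automorphisms `gT` and natural annotation `A_T`, the transversal category `C`
(objects `T`, arrows the arrows of `K` starting in `T`, composition
`a *_C b = a * b^(A_T a)`) is isomorphic to the orbit category `K/G` via
`x ↦ x^G`, `a ↦ a^G`, and this isomorphism preserves the natural annotation
(which is constant on arrow orbits). -/
theorem transversal_category_iso_orbit_category {G : Type} [Group G] (K : SmallCat)
    (ρ : CatAction G K) (htr : Translative ρ)
    (T : Set K.Obj) (hT : IsTransversal ρ T)
    (gT : K.Obj → G) (hgT : ∀ x, ρ.onObj (gT x)⁻¹ x ∈ T) :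
    Function.Bijective
      (fun x : {x : K.Obj // x ∈ T} => Quotient.mk (objSetoid ρ) x.1) ∧
    Function.Bijective
      (fun a : {a : K.Arr // K.src a ∈ T} => Quotient.mk (arrSetoid ρ) a.1) ∧
    (∀ (a : K.Arr) (g : G), natAnn ρ gT (ρ.onArr g a) = natAnn ρ gT a) ∧
    (∀ (a : K.Arr), K.src a ∈ T →
      tgtQ ρ (Quotient.mk (arrSetoid ρ) a) =
        Quotient.mk (objSetoid ρ) (ρ.onObj (gT (K.tgt a))⁻¹ (K.tgt a))) ∧
    (∀ (a b : K.Arr), K.src a ∈ T → K.src b ∈ T →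
      ρ.onObj (gT (K.tgt a))⁻¹ (K.tgt a) = K.src b →
      ∀ (h1 : K.tgt a = K.src (ρ.onArr (natAnn ρ gT a) b)),
        CompRelQ ρ (Quotient.mk (arrSetoid ρ) a) (Quotient.mk (arrSetoid ρ) b)
          (Quotient.mk (arrSetoid ρ) (K.comp a (ρ.onArr (natAnn ρ gT a) b) h1))) := by
  obtain ⟨⟨hsrO, hsrA⟩, _⟩ := htr
  -- transversal uniqueness helper
  have huniq : ∀ x t t', t ∈ T → t' ∈ T → t ∈ orbitO ρ x → t' ∈ orbitO ρ x → t = t' := by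
    intro x t t' ht ht' ho ho'
    obtain ⟨u, hu, huu⟩ := hT x
    rw [huu t ⟨ht, ho⟩, huu t' ⟨ht', ho'⟩]
  have hinv : ∀ (g : G) (x : K.Obj), ρ.onObj g⁻¹ (ρ.onObj g x) = x := by
    intro g x
    rw [← ρ.onObj_mul, mul_inv_cancel, ρ.onObj_one]
  have hinv' : ∀ (g : G) (x : K.Obj), ρ.onObj g (ρ.onObj g⁻¹ x) = x := by
    intro g x
    rw [← ρ.onObj_mul, inv_mul_cancel, ρ.onObj_one]
  refine ⟨⟨?_, ?_⟩, ⟨?_, ?_⟩, ?_, ?_, ?_⟩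
  · -- obj injective
    rintro ⟨x, hx⟩ ⟨y, hy⟩ h
    obtain ⟨g, hg⟩ := Quotient.exact h
    exact Subtype.ext (huniq x x y hx hy ⟨1, ρ.onObj_one x⟩ ⟨g, hg⟩)
  · -- obj surjective
    intro q
    induction q using Quotient.ind with
    | _ x =>
      refine ⟨⟨ρ.onObj (gT x)⁻¹ x, hgT x⟩, Quotient.sound ⟨gT x, hinv' (gT x) x⟩⟩
  · -- arr injective
    rintro ⟨a, ha⟩ ⟨b, hb⟩ h
    obtain ⟨g, hg⟩ := Quotient.exact h
    have hsb : ρ.onObj g (K.src a) = K.src b := by rw [← ρ.src_onArr, hg]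
    have : K.src a = K.src b :=
      huniq (K.src a) (K.src a) (K.src b) ha hb ⟨1, ρ.onObj_one _⟩ ⟨g, hsb⟩
    have hg1 : g = 1 := hsrO g (K.src a) (by rw [hsb, this])
    refine Subtype.ext ?_
    rw [← hg, hg1, ρ.onArr_one]
  · -- arr surjective
    intro q
    induction q using Quotient.ind with
    | _ a =>
      refine ⟨⟨ρ.onArr (gT (K.src a))⁻¹ a, ?_⟩, ?_⟩
      · rw [ρ.src_onArr]; exact hgT (K.src a)
      · refine Quotient.sound ⟨gT (K.src a), ?_⟩
        rw [← ρ.onArr_mul, inv_mul_cancel, ρ.onArr_one]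
  · -- natAnn invariant
    intro a g
    have key : ∀ x : K.Obj, gT (ρ.onObj g x) = gT x * g := by
      intro x
      have h1 : ρ.onObj (gT x * g)⁻¹ (ρ.onObj g x) ∈ T := by
        rw [← ρ.onObj_mul]
        have : g * (gT x * g)⁻¹ = (gT x)⁻¹ := by group
        rw [this]; exact hgT x
      have h2 : ρ.onObj (gT (ρ.onObj g x))⁻¹ (ρ.onObj g x) ∈ T := hgT _
      have heq : ρ.onObj (gT x * g)⁻¹ (ρ.onObj g x) = ρ.onObj (gT (ρ.onObj g x))⁻¹ (ρ.onObj g x) :=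
        huniq (ρ.onObj g x) _ _ h1 h2 ⟨(gT x * g)⁻¹, rfl⟩ ⟨(gT (ρ.onObj g x))⁻¹, rfl⟩
      have : ρ.onObj ((gT x * g)⁻¹ * gT (ρ.onObj g x)) (ρ.onObj g x) = ρ.onObj g x := by
        rw [ρ.onObj_mul, heq, hinv']
      have := hsrO _ _ this
      have := mul_eq_one_iff_eq_inv.mp this
      exact (inv_injective this).symm
    unfold natAnn
    rw [ρ.src_onArr, ρ.tgt_onArr, key, key, mul_inv_rev]
    group
  · -- tgtQ formula
    intro a _
    exact Quotient.sound ⟨(gT (K.tgt a))⁻¹, rfl⟩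
  · -- composition
    intro a b _ _ _ h1
    refine ⟨a, ρ.onArr (natAnn ρ gT a) b, h1, rfl, ?_, rfl⟩
    refine Quotient.sound ⟨(natAnn ρ gT a)⁻¹, ?_⟩
    rw [← ρ.onArr_mul, mul_inv_cancel, ρ.onArr_one]
end

section
/- Let K be a right-groupal category and a ∈ Ob(K). Then x ·_a y := x a^{-1} y is a group operation on Ob(K) with neutral element a, and the map φ(x) = xa is an isomorphism of right-groupal categories from K (with its original group operation) to K with the operation ·_a; φ maps the group operations to each other and is a category isomorphism. -/
set_option linter.unusedVariables false

/-- In a right-groupal category `K`, for any object `a` the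
operation `x ·_a y := x·a⁻¹·y` is a group operation on the objects with
neutral element `a` (inverse `x ↦ a·x⁻¹·a`), and `φ(x) = x·a` (with arrow map
`f ↦ f·a`) is an isomorphism of right-groupal categories from `K` with the
original group operation to `K` with `·_a`. -/
theorem right_groupal_shift_neutral (R : RGC) (a : R.K.Obj) :
    (∀ x y z : R.K.Obj,
      R.mul (R.mul (R.mul (R.mul x (R.inv a)) y) (R.inv a)) z =
        R.mul (R.mul x (R.inv a)) (R.mul (R.mul y (R.inv a)) z)) ∧
    (∀ x : R.K.Obj, R.mul (R.mul a (R.inv a)) x = x) ∧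
    (∀ x : R.K.Obj, R.mul (R.mul x (R.inv a)) a = x) ∧
    (∀ x : R.K.Obj,
      R.mul (R.mul (R.mul (R.mul a (R.inv x)) a) (R.inv a)) x = a ∧
      R.mul (R.mul x (R.inv a)) (R.mul (R.mul a (R.inv x)) a) = a) ∧
    Function.Bijective (fun x : R.K.Obj => R.mul x a) ∧
    (∀ x y : R.K.Obj,
      R.mul (R.mul x y) a = R.mul (R.mul (R.mul x a) (R.inv a)) (R.mul y a)) ∧
    Function.Bijective (fun f : R.K.Arr => R.act f a) ∧
    (∀ f : R.K.Arr, R.K.src (R.act f a) = R.mul (R.K.src f) a) ∧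
    (∀ f : R.K.Arr, R.K.tgt (R.act f a) = R.mul (R.K.tgt f) a) ∧
    (∀ x : R.K.Obj, R.act (R.K.id x) a = R.K.id (R.mul x a)) ∧
    (∀ (f g : R.K.Arr) (h : R.K.tgt f = R.K.src g),
      ∃ h' : R.K.tgt (R.act f a) = R.K.src (R.act g a),
        R.act (R.K.comp f g h) a = R.K.comp (R.act f a) (R.act g a) h') ∧
    (∀ (f : R.K.Arr) (x : R.K.Obj),
      R.act (R.act f x) a = R.act (R.act f a) (R.mul (R.inv a) (R.mul x a))) := by
  letI : Group R.K.Obj :=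
    { mul := R.mul, one := R.one, inv := R.inv,
      mul_assoc := R.mul_assoc, one_mul := R.one_mul, mul_one := R.mul_one,
      inv_mul_cancel := R.inv_mul }
  have hm : ∀ x y : R.K.Obj, R.mul x y = x * y := fun _ _ => rfl
  have hi : ∀ x : R.K.Obj, R.inv x = x⁻¹ := fun _ => rfl
  refine ⟨?_, ?_, ?_, ?_, ?_, ?_, ?_, fun f => R.src_act f a, fun f => R.tgt_act f a,
    fun x => R.act_id x a, ?_, ?_⟩
  · intro x y z; simp only [hm, hi, mul_assoc]
  · intro x; simp only [hm, hi]; group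
  · intro x; simp only [hm, hi]; group
  · intro x; constructor <;> (simp only [hm, hi]; group)
  · constructor
    · intro x y h
      have h2 := congrArg (fun z => R.mul z (R.inv a)) h
      simp only [hm, hi, mul_assoc] at h2
      simpa using h2
    · intro y
      refine ⟨R.mul y (R.inv a), ?_⟩
      simp only [hm, hi, mul_assoc]
      group
  · intro x y; simp only [hm, hi]; group
  · constructor
    · intro f g h
      have h2 := congrArg (fun z => R.act z (R.inv a)) h
      simp only at h2
      rwa [R.act_mul, R.act_mul, R.mul_inv, R.act_one, R.act_one] at h2
    · intro g
      exact ⟨R.act g (R.inv a), by simp only; rw [R.act_mul, R.inv_mul, R.act_one]⟩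
  · intro f g h
    exact ⟨by rw [R.tgt_act, R.src_act, h], R.act_comp f g h a⟩
  · intro f x
    rw [R.act_mul, R.act_mul]
    congr 1
    simp only [hm, hi]; group
end

section
/- Let K be a category and G ≤ Aut(K) a translative automorphism group. Then G is right-normal on K if and only if for every arrow a of K and every arrow x of the vertex category G_{source a} with target(x) = source(a), there exist an automorphism g ∈ G and an arrow C'(a,x) in the vertex category G_{target a} such that x*a = a^g * C'(a,x) and C'(a, id_{source a}) = id_{target a}. -/
set_option linter.unusedVariables false

section RNHelpers

variable {G : Type} [Group G] {K : SmallCat} (ρ : CatAction G K)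

lemma rn_onObj_inv {g : G} {x y : K.Obj} (h : ρ.onObj g x = y) : ρ.onObj g⁻¹ y = x := by
  rw [← h, ← ρ.onObj_mul, mul_inv_cancel, ρ.onObj_one]

lemma rn_onArr_inv {g : G} {a b : K.Arr} (h : ρ.onArr g a = b) : ρ.onArr g⁻¹ b = a := by
  rw [← h, ← ρ.onArr_mul, mul_inv_cancel, ρ.onArr_one]

lemma rn_arr_exact {a b : K.Arr}
    (h : Quotient.mk (arrSetoid ρ) a = Quotient.mk (arrSetoid ρ) b) :
    ∃ g, ρ.onArr g a = b := Quotient.exact h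

lemma rn_arr_sound (g : G) {a b : K.Arr} (h : ρ.onArr g a = b) :
    Quotient.mk (arrSetoid ρ) a = Quotient.mk (arrSetoid ρ) b := Quotient.sound ⟨g, h⟩

lemma rn_obj_exact {a b : K.Obj}
    (h : Quotient.mk (objSetoid ρ) a = Quotient.mk (objSetoid ρ) b) :
    ∃ g, ρ.onObj g a = b := Quotient.exact h

lemma rn_obj_sound (g : G) {a b : K.Obj} (h : ρ.onObj g a = b) :
    Quotient.mk (objSetoid ρ) a = Quotient.mk (objSetoid ρ) b := Quotient.sound ⟨g, h⟩

lemma rn_memO {z y : K.Obj} :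
    y ∈ orbitO ρ z ↔ Quotient.mk (objSetoid ρ) z = Quotient.mk (objSetoid ρ) y :=
  ⟨fun h => Quotient.sound h, fun h => Quotient.exact h⟩

lemma rn_objc (hsr : ∀ g x, ρ.onObj g x = x → g = 1) {g h : G} {x : K.Obj}
    (e : ρ.onObj g x = ρ.onObj h x) : g = h := by
  have e2 : ρ.onObj (g * h⁻¹) x = x := by
    rw [ρ.onObj_mul, e, ← ρ.onObj_mul, mul_inv_cancel, ρ.onObj_one]
  exact mul_inv_eq_one.mp (hsr _ _ e2)

/-- Composition in the orbit category is well defined on composable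
representatives, thanks to semi-regularity. -/
lemma rn_compWD (hsr : ∀ g x, ρ.onObj g x = x → g = 1)
    (x a : K.Arr) (h : K.tgt x = K.src a) (x' a' : K.Arr) (h' : K.tgt x' = K.src a')
    (hx : Quotient.mk (arrSetoid ρ) x = Quotient.mk (arrSetoid ρ) x')
    (ha : Quotient.mk (arrSetoid ρ) a = Quotient.mk (arrSetoid ρ) a') :
    Quotient.mk (arrSetoid ρ) (K.comp x a h) = Quotient.mk (arrSetoid ρ) (K.comp x' a' h') := by
  obtain ⟨p, hp⟩ := rn_arr_exact ρ hx
  obtain ⟨q, hq⟩ := rn_arr_exact ρ ha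
  subst hp; subst hq
  have e1 : ρ.onObj p (K.src a) = ρ.onObj q (K.src a) := by
    have e0 := h'
    rw [ρ.tgt_onArr, ρ.src_onArr, h] at e0
    exact e0
  have hpq : p = q := rn_objc ρ hsr e1
  subst hpq
  exact rn_arr_sound ρ p (ρ.onArr_comp p x a h)

end RNHelpers

/-- For a translative automorphism group `G ≤ Aut K`, the action
is right-normal on `K` iff for every arrow `a` and every arrow `x` of the
vertex category `G_(src a)` with `tgt x = src a` there exist `g ∈ G` and an
arrow `C'(a,x)` of the vertex category `G_(tgt a)` with
`x * a = a^g * C'(a,x)` and `C'(a, id_(src a)) = id_(tgt a)`. -/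
theorem right_normal_iff_representatives {G : Type} [Group G] (K : SmallCat)
    (ρ : CatAction G K) (htr : Translative ρ) :
    RightNormal ρ ↔
      ∃ (C' : K.Arr → K.Arr → K.Arr) (gf : K.Arr → K.Arr → G),
        (∀ (a x : K.Arr), K.src x ∈ orbitO ρ (K.src a) →
          K.tgt x ∈ orbitO ρ (K.src a) →
          ∀ h : K.tgt x = K.src a,
            (K.src (C' a x) ∈ orbitO ρ (K.tgt a) ∧
              K.tgt (C' a x) ∈ orbitO ρ (K.tgt a)) ∧
            ∃ h2 : K.tgt (ρ.onArr (gf a x) a) = K.src (C' a x),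
              K.comp x a h = K.comp (ρ.onArr (gf a x) a) (C' a x) h2) ∧
        (∀ a : K.Arr, C' a (K.id (K.src a)) = K.id (K.tgt a)) := by
  classical
  obtain ⟨⟨hsrO, hsrA⟩, -⟩ := htr
  constructor
  · rintro ⟨C, hC1, hC2⟩
    have key : ∀ a x : K.Arr, ∃ (c : K.Arr) (g : G),
        ((K.src x ∈ orbitO ρ (K.src a)) → (K.tgt x ∈ orbitO ρ (K.src a)) →
          ∀ h : K.tgt x = K.src a,
            ((K.src c ∈ orbitO ρ (K.tgt a) ∧ K.tgt c ∈ orbitO ρ (K.tgt a)) ∧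
              ∃ h2 : K.tgt (ρ.onArr g a) = K.src c,
                K.comp x a h = K.comp (ρ.onArr g a) c h2)) ∧
        (x = K.id (K.src a) → c = K.id (K.tgt a)) := by
      intro a x
      by_cases hid : x = K.id (K.src a)
      · subst hid
        refine ⟨K.id (K.tgt a), 1, ?_, fun _ => rfl⟩
        intro hs ht h
        refine ⟨⟨⟨1, by rw [ρ.onObj_one, K.src_id]⟩, ⟨1, by rw [ρ.onObj_one, K.tgt_id]⟩⟩, ?_⟩
        have h2 : K.tgt (ρ.onArr 1 a) = K.src (K.id (K.tgt a)) := by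
          rw [ρ.onArr_one, K.src_id]
        refine ⟨h2, ?_⟩
        have e1 : K.comp (K.id (K.src a)) a h = a := K.id_comp a
        have e2 : K.comp (ρ.onArr 1 a) (K.id (K.tgt a)) h2 = a := by
          simp only [ρ.onArr_one]
          exact K.comp_id a
        rw [e1, e2]
      · by_cases hh : (K.src x ∈ orbitO ρ (K.src a)) ∧ (K.tgt x ∈ orbitO ρ (K.src a)) ∧
            K.tgt x = K.src a
        · obtain ⟨hs, ht, h⟩ := hh
          have hsq : srcQ ρ (Quotient.mk (arrSetoid ρ) x) =
              srcQ ρ (Quotient.mk (arrSetoid ρ) a) := ((rn_memO ρ).mp hs).symm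
          have htq : tgtQ ρ (Quotient.mk (arrSetoid ρ) x) =
              srcQ ρ (Quotient.mk (arrSetoid ρ) a) := by
            show Quotient.mk (objSetoid ρ) (K.tgt x) = Quotient.mk (objSetoid ρ) (K.src a)
            rw [h]
          obtain ⟨⟨hsC, htC⟩, hcomp⟩ := hC1 a x hsq htq
          obtain ⟨c₀, hc₀⟩ := Quotient.exists_rep
            (C (Quotient.mk (arrSetoid ρ) a) (Quotient.mk (arrSetoid ρ) x))
          rw [← hc₀] at hsC htC
          have hsC' : Quotient.mk (objSetoid ρ) (K.src c₀) =
              Quotient.mk (objSetoid ρ) (K.tgt a) := hsC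
          have htC' : Quotient.mk (objSetoid ρ) (K.tgt c₀) =
              Quotient.mk (objSetoid ρ) (K.tgt a) := htC
          obtain ⟨m, hm⟩ := rn_obj_exact ρ hsC'
          have hg : ρ.onObj m⁻¹ (K.tgt a) = K.src c₀ := rn_onObj_inv ρ hm
          have h2₀ : K.tgt (ρ.onArr m⁻¹ a) = K.src c₀ := by rw [ρ.tgt_onArr, hg]
          have haa : Quotient.mk (arrSetoid ρ) (ρ.onArr m⁻¹ a) =
              Quotient.mk (arrSetoid ρ) a :=
            rn_arr_sound ρ m (by rw [← ρ.onArr_mul, inv_mul_cancel, ρ.onArr_one])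
          have hmk := hcomp x a h rfl rfl (ρ.onArr m⁻¹ a) c₀ h2₀ haa hc₀
          obtain ⟨k, hk⟩ := rn_arr_exact ρ hmk
          have hk' : ρ.onArr k⁻¹ (K.comp (ρ.onArr m⁻¹ a) c₀ h2₀) = K.comp x a h :=
            rn_onArr_inv ρ hk
          refine ⟨ρ.onArr k⁻¹ c₀, m⁻¹ * k⁻¹, ?_, fun hx => absurd hx hid⟩
          intro hs' ht' h'
          constructor
          · constructor
            · exact ⟨m⁻¹ * k⁻¹, by rw [ρ.onObj_mul, hg, ← ρ.src_onArr]⟩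
            · obtain ⟨n, hn⟩ := rn_obj_exact ρ htC'
              exact ⟨n⁻¹ * k⁻¹, by rw [ρ.onObj_mul, rn_onObj_inv ρ hn, ← ρ.tgt_onArr]⟩
          · have h2' : K.tgt (ρ.onArr (m⁻¹ * k⁻¹) a) = K.src (ρ.onArr k⁻¹ c₀) := by
              rw [ρ.onArr_mul, ρ.tgt_onArr, h2₀, ρ.src_onArr]
            refine ⟨h2', ?_⟩
            exact hk'.symm.trans ((ρ.onArr_comp k⁻¹ (ρ.onArr m⁻¹ a) c₀ h2₀).trans
              (by simp only [ρ.onArr_mul]))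
        · exact ⟨K.id (K.tgt a), 1, fun hs ht h => absurd ⟨hs, ht, h⟩ hh,
            fun hx => absurd hx hid⟩
    choose C' gf hspec using key
    exact ⟨C', gf, fun a x hs ht h => (hspec a x).1 hs ht h,
      fun a => (hspec a (K.id (K.src a))).2 rfl⟩
  · rintro ⟨C', gf, hP, hidC⟩
    obtain ⟨Cfun, hCrep⟩ : ∃ Cfun : Quotient (arrSetoid ρ) → Quotient (arrSetoid ρ) →
        Quotient (arrSetoid ρ),
        ∀ α ξ, (∃ p : K.Arr × K.Arr, K.tgt p.2 = K.src p.1 ∧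
            Quotient.mk (arrSetoid ρ) p.1 = α ∧ Quotient.mk (arrSetoid ρ) p.2 = ξ) →
          ∃ (a₁ x₁ : K.Arr) (h₁ : K.tgt x₁ = K.src a₁),
            Quotient.mk (arrSetoid ρ) a₁ = α ∧ Quotient.mk (arrSetoid ρ) x₁ = ξ ∧
            Cfun α ξ = Quotient.mk (arrSetoid ρ) (C' a₁ x₁) := by
      refine ⟨fun α ξ => if h : (∃ p : K.Arr × K.Arr, K.tgt p.2 = K.src p.1 ∧
          Quotient.mk (arrSetoid ρ) p.1 = α ∧ Quotient.mk (arrSetoid ρ) p.2 = ξ) then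
          Quotient.mk (arrSetoid ρ) (C' h.choose.1 h.choose.2) else α, ?_⟩
      intro α ξ hE
      exact ⟨hE.choose.1, hE.choose.2, hE.choose_spec.1, hE.choose_spec.2.1,
        hE.choose_spec.2.2, dif_pos hE⟩
    refine ⟨Cfun, ?_, ?_⟩
    · intro a x hsq htq
      have hE : ∃ p : K.Arr × K.Arr, K.tgt p.2 = K.src p.1 ∧
          Quotient.mk (arrSetoid ρ) p.1 = Quotient.mk (arrSetoid ρ) a ∧
          Quotient.mk (arrSetoid ρ) p.2 = Quotient.mk (arrSetoid ρ) x := by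
        obtain ⟨m, hm⟩ := rn_obj_exact ρ htq
        exact ⟨(a, ρ.onArr m x), by rw [ρ.tgt_onArr, hm], rfl,
          Quotient.sound ⟨m⁻¹, rn_onArr_inv ρ rfl⟩⟩
      obtain ⟨a₁, x₁, h₁, ha₁, hx₁, hCeq⟩ := hCrep _ _ hE
      have e1 : Quotient.mk (objSetoid ρ) (K.src a₁) =
          Quotient.mk (objSetoid ρ) (K.src x₁) :=
        (congrArg (srcQ ρ) ha₁).trans (hsq.symm.trans (congrArg (srcQ ρ) hx₁).symm)
      have mem1 : K.src x₁ ∈ orbitO ρ (K.src a₁) := (rn_memO ρ).mpr e1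
      have mem2 : K.tgt x₁ ∈ orbitO ρ (K.src a₁) :=
        ⟨1, by rw [ρ.onObj_one]; exact h₁.symm⟩
      obtain ⟨⟨mS, mT⟩, h2, hce⟩ := hP a₁ x₁ mem1 mem2 h₁
      constructor
      · constructor
        · rw [hCeq]
          exact ((rn_memO ρ).mp mS).symm.trans (congrArg (tgtQ ρ) ha₁)
        · rw [hCeq]
          exact ((rn_memO ρ).mp mT).symm.trans (congrArg (tgtQ ρ) ha₁)
      · intro x' a' h1' hx' ha' a'' c h2' ha'' hc
        have L : Quotient.mk (arrSetoid ρ) (K.comp x' a' h1') =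
            Quotient.mk (arrSetoid ρ) (K.comp x₁ a₁ h₁) :=
          rn_compWD ρ hsrO x' a' h1' x₁ a₁ h₁ (hx'.trans hx₁.symm) (ha'.trans ha₁.symm)
        have R : Quotient.mk (arrSetoid ρ) (K.comp a'' c h2') =
            Quotient.mk (arrSetoid ρ)
              (K.comp (ρ.onArr (gf a₁ x₁) a₁) (C' a₁ x₁) h2) :=
          rn_compWD ρ hsrO a'' c h2' _ _ h2
            (ha''.trans (ha₁.symm.trans (rn_arr_sound ρ (gf a₁ x₁) rfl)))
            (hc.trans hCeq)
        exact L.trans ((congrArg (Quotient.mk (arrSetoid ρ)) hce).trans R.symm)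
    · intro a
      have hE : ∃ p : K.Arr × K.Arr, K.tgt p.2 = K.src p.1 ∧
          Quotient.mk (arrSetoid ρ) p.1 = Quotient.mk (arrSetoid ρ) a ∧
          Quotient.mk (arrSetoid ρ) p.2 =
            Quotient.mk (arrSetoid ρ) (K.id (K.src a)) :=
        ⟨(a, K.id (K.src a)), K.tgt_id _, rfl, rfl⟩
      obtain ⟨a₁, x₁, h₁, ha₁, hx₁, hCeq⟩ := hCrep _ _ hE
      obtain ⟨n, hn⟩ := rn_arr_exact ρ hx₁.symm
      obtain ⟨m, hm⟩ := rn_arr_exact ρ ha₁.symm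
      have hx₁' : x₁ = K.id (ρ.onObj n (K.src a)) := by rw [← hn, ρ.onArr_id]
      have e : ρ.onObj n (K.src a) = ρ.onObj m (K.src a) := by
        have e0 := h₁
        rw [hx₁', K.tgt_id, ← hm, ρ.src_onArr] at e0
        exact e0
      have hnm : n = m := rn_objc ρ hsrO e
      subst hnm
      have hx₁'' : x₁ = K.id (K.src a₁) := by rw [hx₁', ← hm, ρ.src_onArr]
      rw [hCeq, hx₁'', hidC a₁]
      refine (rn_arr_sound ρ n ?_).symm
      rw [ρ.onArr_id, ← hm, ρ.tgt_onArr]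
end

section
/- Let K be a groupal category. Then every subgroup of the object group of K, acting on K by the right-associative action, is right-normal on the category K. In particular, every subgroup of a po-group acts right-normally on the po-group viewed as a category. -/
set_option linter.unusedVariables false

/-! A subgroup `H` acts freely on objects by left translation, so the orbit of a composite
depends only on the orbits of its factors. For a loop orbit, take representatives `x : u → v`,
`a : v → w` with `v = k u`, `k ∈ H`. The interchange law applied to `k • x` and `v⁻¹ • a` gives
`k • (x ≫ a) = a ≫ c` with `c = (k • x) • (v⁻¹ w)` a loop at `w`, and `c` is an identity when
`x` is. A po-group is a groupal category whose two actions are the translations. -/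

theorem SmallCat.comp_congr (K : SmallCat) {a a' b b' : K.Arr} (h : K.tgt a = K.src b)
    (ha : a = a') (hb : b = b') :
    K.comp a b h = K.comp a' b' (ha ▸ hb ▸ h) := by
  subst ha hb; rfl

namespace RGC

variable (R : RGC)

theorem inv_mul_cancel_left (u v : R.K.Obj) : R.mul (R.inv u) (R.mul u v) = v := by
  rw [← R.mul_assoc, R.inv_mul, R.one_mul]

theorem mul_inv_cancel_left (u v : R.K.Obj) : R.mul u (R.mul (R.inv u) v) = v := by
  rw [← R.mul_assoc, R.mul_inv, R.one_mul]

theorem mul_right_cancel {u v w : R.K.Obj} (h : R.mul u w = R.mul v w) : u = v := by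
  simpa [R.mul_assoc, R.mul_inv, R.mul_one] using congrArg (R.mul · (R.inv w)) h

theorem inv_injective : Function.Injective R.inv := fun u v h =>
  R.mul_right_cancel (w := R.inv u) (by rw [R.mul_inv, h, R.mul_inv])

end RGC

namespace CatAction

variable {G : Type} [Group G] {K : SmallCat} (ρ : CatAction G K)

local notation "⟦" a "⟧ₐ" => Quotient.mk (arrSetoid ρ) a
local notation "⟦" x "⟧ₒ" => Quotient.mk (objSetoid ρ) x

theorem mk_onArr (g : G) (a : K.Arr) : ⟦ρ.onArr g a⟧ₐ = ⟦a⟧ₐ :=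
  (Quotient.sound (s := arrSetoid ρ) ⟨g, rfl⟩).symm

theorem mk_comp_eq_mk_comp (hfree : ∀ g h x, ρ.onObj g x = ρ.onObj h x → g = h)
    {a b a' b' : K.Arr} (h : K.tgt a = K.src b) (h' : K.tgt a' = K.src b')
    (ha : ⟦a⟧ₐ = ⟦a'⟧ₐ) (hb : ⟦b⟧ₐ = ⟦b'⟧ₐ) :
    ⟦K.comp a b h⟧ₐ = ⟦K.comp a' b' h'⟧ₐ := by
  obtain ⟨g, rfl⟩ := Quotient.exact ha
  obtain ⟨k, rfl⟩ := Quotient.exact hb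
  have hgk : g = k := hfree g k (K.tgt a) (by
    rw [← ρ.tgt_onArr, h', ρ.src_onArr, h])
  subst hgk
  rw [← ρ.mk_onArr g (K.comp a b h), ρ.onArr_comp]

/-- The implication sits inside the existential so that `choose` gives a total choice of
composable representatives. -/
theorem exists_composable_reps (α ξ : Quotient (arrSetoid ρ)) : ∃ p : K.Arr × K.Arr,
    tgtQ ρ ξ = srcQ ρ α → ⟦p.1⟧ₐ = α ∧ ⟦p.2⟧ₐ = ξ ∧ K.tgt p.2 = K.src p.1 := by
  induction α using Quotient.inductionOn with | h a => ?_
  induction ξ using Quotient.inductionOn with | h x => ?_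
  by_cases hx : tgtQ ρ ⟦x⟧ₐ = srcQ ρ ⟦a⟧ₐ
  · obtain ⟨g, hg⟩ := Quotient.exact hx
    exact ⟨(a, ρ.onArr g x), fun _ => ⟨rfl, ρ.mk_onArr g x, by rw [ρ.tgt_onArr, hg]⟩⟩
  · exact ⟨(a, x), fun h => absurd h hx⟩

/-- Freeness makes the orbit of a composite depend only on the orbits of its factors, so the
witness `C` may be computed on any composable pair of representatives. -/
theorem rightNormal_of_free (hfree : ∀ g h x, ρ.onObj g x = ρ.onObj h x → g = h)
    (slide : K.Arr → K.Arr → K.Arr) (src_slide : ∀ a x, K.src (slide a x) = K.tgt a)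
    (mk_comp_slide : ∀ a x (h : K.tgt x = K.src a), ⟦K.src x⟧ₒ = ⟦K.src a⟧ₒ →
      ⟦K.comp x a h⟧ₐ = ⟦K.comp a (slide a x) (src_slide a x).symm⟧ₐ)
    (slide_id : ∀ a, slide a (K.id (K.src a)) = K.id (K.tgt a)) :
    RightNormal ρ := by
  choose rep hrep using ρ.exists_composable_reps
  refine ⟨fun α ξ => ⟦slide (rep α ξ).1 (rep α ξ).2⟧ₐ, ?_, ?_⟩
  · intro a x hs ht
    obtain ⟨hA, hX, hXA⟩ := hrep ⟦a⟧ₐ ⟦x⟧ₐ ht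
    set A := (rep ⟦a⟧ₐ ⟦x⟧ₐ).1
    set X := (rep ⟦a⟧ₐ ⟦x⟧ₐ).2
    have hsrc : ⟦K.src X⟧ₒ = ⟦K.src A⟧ₒ := by
      rwa [← hA, ← hX] at hs
    have hslide := mk_comp_slide A X hXA hsrc
    refine ⟨⟨?_, ?_⟩, ?_⟩
    · show ⟦K.src (slide A X)⟧ₒ = tgtQ ρ ⟦a⟧ₐ
      rw [src_slide, ← hA]; rfl
    · show ⟦K.tgt (slide A X)⟧ₒ = tgtQ ρ ⟦a⟧ₐ
      have := congrArg (tgtQ ρ) hslide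
      simp only [tgtQ, Quotient.lift_mk, K.tgt_comp] at this
      rw [← this, ← hA]; rfl
    · intro x' a' h₁ hx' ha' a'' c h₂ ha'' hc
      calc ⟦K.comp x' a' h₁⟧ₐ = ⟦K.comp X A hXA⟧ₐ :=
            ρ.mk_comp_eq_mk_comp hfree _ _ (hx'.trans hX.symm) (ha'.trans hA.symm)
        _ = ⟦K.comp A (slide A X) _⟧ₐ := hslide
        _ = ⟦K.comp a'' c h₂⟧ₐ :=
            ρ.mk_comp_eq_mk_comp hfree _ _ (hA.trans ha''.symm) hc.symm
  · intro a
    obtain ⟨hA, hX, hXA⟩ := hrep ⟦a⟧ₐ ⟦K.id (K.src a)⟧ₐ (by simp [tgtQ, srcQ, K.tgt_id])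
    set A := (rep ⟦a⟧ₐ ⟦K.id (K.src a)⟧ₐ).1
    set X := (rep ⟦a⟧ₐ ⟦K.id (K.src a)⟧ₐ).2
    obtain ⟨g, hg⟩ := Quotient.exact hX.symm
    have hX_id : X = K.id (K.src A) := by
      rw [← hXA, ← hg, ρ.onArr_id, K.tgt_id]
    obtain ⟨k, hk⟩ := Quotient.exact hA
    show ⟦slide A X⟧ₐ = ⟦K.id (K.tgt a)⟧ₐ
    rw [hX_id, slide_id, ← hk, ρ.tgt_onArr, ← ρ.onArr_id, ρ.mk_onArr]

end CatAction

namespace GroupalCat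

variable (R : GroupalCat)

def slide (a x : R.K.Arr) : R.K.Arr :=
  R.act (R.lact (R.mul (R.K.src a) (R.inv (R.K.src x))) x)
    (R.mul (R.inv (R.K.src a)) (R.K.tgt a))

theorem src_slide (a x : R.K.Arr) : R.K.src (R.slide a x) = R.K.tgt a := by
  simp [slide, R.src_act, R.src_lact, R.mul_assoc, R.inv_mul_cancel_left,
    R.mul_inv_cancel_left]

theorem comp_slide (a x : R.K.Arr) (h : R.K.tgt x = R.K.src a) :
    R.K.comp a (R.slide a x) (R.src_slide a x).symm =
      R.lact (R.mul (R.K.src a) (R.inv (R.K.src x))) (R.K.comp x a h) := by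
  set w := R.mul (R.K.src a) (R.inv (R.K.src x))
  set X := R.lact w x
  set B := R.lact (R.inv (R.K.src a)) a
  have e1 : R.lact (R.K.src X) B = a := by
    rw [R.src_lact, R.lact_mul, R.mul_assoc, R.mul_assoc, R.inv_mul_cancel_left, R.mul_inv,
      R.lact_one]
  have e2 : R.act X (R.K.tgt B) = R.slide a x := by
    rw [R.tgt_lact]; rfl
  have e3 : R.act X (R.K.src B) = X := by
    rw [R.src_lact, R.inv_mul, R.act_one]
  have e4 : R.lact (R.K.tgt X) B = R.lact w a := by
    rw [R.tgt_lact, R.lact_mul, h, R.mul_assoc w, R.mul_inv, R.mul_one]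
  have e5 : R.K.tgt X = R.K.src (R.lact w a) := by
    rw [R.tgt_lact, R.src_lact, h]
  calc R.K.comp a (R.slide a x) (R.src_slide a x).symm
      = R.K.comp (R.lact (R.K.src X) B) (R.act X (R.K.tgt B))
          (by rw [e1, e2, src_slide]) := R.K.comp_congr _ e1.symm e2.symm
    _ = R.K.comp (R.act X (R.K.src B)) (R.lact (R.K.tgt X) B)
          (by rw [e3, e4]; exact e5) := (R.interchange X B).symm
    _ = R.K.comp X (R.lact w a) e5 := R.K.comp_congr _ e3 e4
    _ = R.lact w (R.K.comp x a h) := (R.lact_comp w x a h).symm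

theorem slide_id (a : R.K.Arr) : R.slide a (R.K.id (R.K.src a)) = R.K.id (R.K.tgt a) := by
  simp [slide, R.K.src_id, R.lact_id, R.act_id, R.mul_inv, R.one_mul, R.mul_inv_cancel_left]

theorem rightNormal_of_lact_inv {G : Type} [Group G] (e : G → R.K.Obj)
    (he : Function.Injective e) (ρ : CatAction G R.K)
    (hO : ∀ g x, ρ.onObj g x = R.mul (R.inv (e g)) x)
    (hA : ∀ g a, ρ.onArr g a = R.lact (R.inv (e g)) a) :
    RightNormal ρ := by
  refine ρ.rightNormal_of_free (fun g k x hx => he (R.inv_injective (R.mul_right_cancel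
    (by rwa [hO, hO] at hx)))) R.slide R.src_slide (fun a x h hsrc => ?_) R.slide_id
  obtain ⟨k, hk⟩ := Quotient.exact hsrc
  have hw : R.mul (R.K.src a) (R.inv (R.K.src x)) = R.inv (e k) := by
    rw [← hk, hO, R.mul_assoc, R.mul_inv, R.mul_one]
  rw [R.comp_slide a x h, hw, ← hA, ρ.mk_onArr]

end GroupalCat

def poGroupalCat (P : Type) [Group P] [PartialOrder P] [MulLeftMono P] [MulRightMono P] :
    GroupalCat where
  K := poCat P
  mul := (· * · : P → P → P)
  one := (1 : P)
  inv := (·⁻¹ : P → P)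
  mul_assoc := mul_assoc (G := P)
  one_mul := one_mul (M := P)
  mul_one := mul_one (M := P)
  inv_mul := inv_mul_cancel (G := P)
  mul_inv := mul_inv_cancel (G := P)
  act a (x : P) := ⟨(a.1.1 * x, a.1.2 * x), mul_le_mul_left a.2 x⟩
  act_one a := Subtype.ext (by simp)
  act_mul a (x y : P) := Subtype.ext (by simp [mul_assoc])
  src_act a x := rfl
  tgt_act a x := rfl
  act_id y x := rfl
  act_comp a b h x := rfl
  lact (x : P) a := ⟨(x * a.1.1, x * a.1.2), mul_le_mul_right a.2 x⟩
  lact_one a := Subtype.ext (by simp)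
  lact_mul (x y : P) a := Subtype.ext (by simp [mul_assoc])
  src_lact x a := rfl
  tgt_lact x a := rfl
  lact_id x y := rfl
  lact_comp x a b h := rfl
  lact_act (x : P) a (y : P) := Subtype.ext (by simp [mul_assoc])
  interchange a b := rfl

/-- Every subgroup of the object group of a groupal category `R`
(given by an injective group homomorphism `e : G → Ob R`), acting on `R` by the
right-associative action (via left multiplication), is right-normal on the
category. In particular, every subgroup `S` of a po-group `P` acts
right-normally on `P` viewed as a category. -/
theorem subgroup_of_groupal_right_normal :
    (∀ {G : Type} [Group G] (R : GroupalCat) (e : G → R.K.Obj),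
      Function.Injective e → (∀ g h : G, e (g * h) = R.mul (e g) (e h)) →
      ∀ ρ : CatAction G R.K,
        (∀ (g : G) (x : R.K.Obj), ρ.onObj g x = R.mul (R.inv (e g)) x) →
        (∀ (g : G) (a : R.K.Arr), ρ.onArr g a = R.lact (R.inv (e g)) a) →
        RightNormal ρ) ∧
    (∀ (P : Type) [Group P] [PartialOrder P],
      (∀ x y a b : P, a ≤ b ↔ x * a * y ≤ x * b * y) →
      ∀ (S : Subgroup P) (ρ : CatAction S (poCat P)),
        (∀ (s : S) (x : P), ρ.onObj s x = (s : P)⁻¹ * x) →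
        (∀ (s : S) (f : (poCat P).Arr),
          (ρ.onArr s f).1 = ((s : P)⁻¹ * f.1.1, (s : P)⁻¹ * f.1.2)) →
        RightNormal ρ) := by
  refine ⟨fun R e he _ ρ hO hA => R.rightNormal_of_lact_inv e he ρ hO hA, ?_⟩
  intro P _ _ hP S ρ hO hA
  have : MulLeftMono P := ⟨fun x a b h => by simpa using (hP x 1 a b).mp h⟩
  have : MulRightMono P := ⟨fun y a b h => by simpa using (hP 1 y a b).mp h⟩
  exact (poGroupalCat P).rightNormal_of_lact_inv (Subtype.val : S → P) Subtype.val_injective ρ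
    hO (fun s f => Subtype.ext (hA s f))
end
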